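/- The vector φ₀ with φ₀(x) = √(∏_{y=0}^{x-1} B(y)/D(y+1)) satisfies Aφ₀ = 0, where A_{xx} = √(B(x)), A_{x,x+1} = -√(D(x+1)); consequently Hφ₀ = 0 with H = AᵀA, i.e. φ₀ is a zero mode of H. -/

import Mathlib

/-! Since `A` is upper bidiagonal, `(A φ₀)(x) = √B(x) φ₀(x) - √D(x+1) φ₀(x+1)` for `x < N`, and the
product formula gives `φ₀(x+1) = φ₀(x) √B(x) / √D(x+1)`, so these rows vanish; the last row is
`√B(N) φ₀(N) = 0`. Then `AᵀA φ₀ = Aᵀ 0 = 0`. -/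

open Finset Matrix

theorem sqrt_mul_sqrt_prod_range_div_succ {B D : ℕ → ℝ} {x : ℕ}
    (hB : ∀ y ≤ x, 0 ≤ B y) (hD : ∀ y ≤ x, 0 < D (y + 1)) :
    √(B x) * √(∏ y ∈ range x, B y / D (y + 1)) =
      √(D (x + 1)) * √(∏ y ∈ range (x + 1), B y / D (y + 1)) := by
  have hprod : 0 ≤ ∏ y ∈ range x, B y / D (y + 1) :=
    prod_nonneg fun y hy ↦ div_nonneg (hB y (mem_range.1 hy).le) (hD y (mem_range.1 hy).le).le
  have hsqrtD : √(D (x + 1)) ≠ 0 := (Real.sqrt_pos.2 (hD x le_rfl)).ne'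
  rw [prod_range_succ, Real.sqrt_mul hprod, Real.sqrt_div (hB x le_rfl)]
  field_simp

section UpperBidiagonal

variable {R : Type*} [CommRing R] {n : ℕ} {A : Matrix (Fin n) (Fin n) R} {a b : ℕ → R}

theorem mulVec_apply_of_upperBidiagonal
    (hA : ∀ x y : Fin n, A x y = if x = y then a x else if y.val = x.val + 1 then -b y else 0)
    (w : ℕ → R) (x : Fin n) :
    (A *ᵥ fun y ↦ w y) x = a x * w x - if x.val + 1 < n then b (x + 1) * w (x + 1) else 0 := by
  have hsplit : ∀ y : Fin n, A x y * w y =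
      (if x = y then a x * w x else 0) - if y.val = x.val + 1 then b y * w y else 0 := by
    intro y
    rw [hA]
    by_cases hxy : x = y
    · subst hxy
      simp
    · split_ifs <;> ring
  simp only [mulVec, dotProduct, hsplit, sum_sub_distrib, sum_ite_eq, mem_univ, if_true]
  rw [Fin.sum_univ_eq_sum_range (fun y ↦ if y = x.val + 1 then b y * w y else 0), sum_ite_eq']
  simp only [mem_range]

theorem mulVec_eq_zero_of_upperBidiagonal
    (hA : ∀ x y : Fin n, A x y = if x = y then a x else if y.val = x.val + 1 then -b y else 0)
    (w : ℕ → R) (hstep : ∀ x, x + 1 < n → a x * w x = b (x + 1) * w (x + 1))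
    (hlast : ∀ x, x + 1 = n → a x * w x = 0) :
    (A *ᵥ fun y ↦ w y) = 0 := by
  funext x
  rw [mulVec_apply_of_upperBidiagonal hA, Pi.zero_apply]
  split_ifs with hx
  · rw [hstep x hx, sub_self]
  · rw [hlast x (by omega), sub_zero]

end UpperBidiagonal

theorem stmt_9_general (N : ℕ) (B D : ℕ → ℝ)
    (hB : ∀ x < N, 0 < B x) (hD : ∀ x, 0 < x → x ≤ N → 0 < D x)
    (hBN : B N = 0)
    (A : Matrix (Fin (N+1)) (Fin (N+1)) ℝ)
    (hA : ∀ x y : Fin (N+1), A x y =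
      if x = y then Real.sqrt (B x.val)
      else if y.val = x.val + 1 then -Real.sqrt (D y.val) else 0)
    (phi0 : Fin (N+1) → ℝ)
    (hphi : ∀ x : Fin (N+1),
      phi0 x = Real.sqrt (∏ y ∈ Finset.range x.val, B y / D (y+1))) :
    A.mulVec phi0 = 0 ∧ (A.transpose * A).mulVec phi0 = 0 := by
  obtain rfl : phi0 = fun x ↦ √(∏ y ∈ range x.val, B y / D (y + 1)) := funext hphi
  have hzero : A *ᵥ (fun x : Fin (N + 1) ↦ √(∏ y ∈ range x.val, B y / D (y + 1))) = 0 := by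
    refine mulVec_eq_zero_of_upperBidiagonal (a := fun x ↦ √(B x)) (b := fun x ↦ √(D x)) hA
      (fun x ↦ √(∏ y ∈ range x, B y / D (y + 1))) (fun x hx ↦ ?_) (fun x hx ↦ ?_)
    · exact sqrt_mul_sqrt_prod_range_div_succ (fun y hy ↦ (hB y (by omega)).le)
        (fun y hy ↦ hD (y + 1) (by omega) (by omega))
    · obtain rfl : x = N := by omega
      simp [hBN]
  exact ⟨hzero, by rw [← mulVec_mulVec, hzero, mulVec_zero]⟩

/-- φ₀ is a zero mode of A, hence of H = A.transposeA. -/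
theorem stmt_9 (N : ℕ) (B D : ℕ → ℝ)
    (hB : ∀ x < N, 0 < B x) (hD : ∀ x, 0 < x → x ≤ N → 0 < D x)
    (hD0 : D 0 = 0) (hBN : B N = 0)
    (A : Matrix (Fin (N+1)) (Fin (N+1)) ℝ)
    (hA : ∀ x y : Fin (N+1), A x y =
      if x = y then Real.sqrt (B x.val)
      else if y.val = x.val + 1 then -Real.sqrt (D y.val) else 0)
    (phi0 : Fin (N+1) → ℝ)
    (hphi : ∀ x : Fin (N+1),
      phi0 x = Real.sqrt (∏ y ∈ Finset.range x.val, B y / D (y+1))) :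
    A.mulVec phi0 = 0 ∧ (A.transpose * A).mulVec phi0 = 0 :=
  stmt_9_general N B D hB hD hBN A hA phi0 hphi
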